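/- Let φ : ℝ^q → ℝ be a smooth bounded function satisfying the equation 2Δφ + (n−2)|dφ|² + k e^{−2φ} = 0 on ℝ^q for some constant k, where n > 2 and Δ is the nonnegative Laplacian. Evaluating at a minimum point of φ (if one exists) shows k ≥ 0; more generally, boundedness of φ forces k ≥ 0. -/

import Mathlib

open Real Filter Set Topology

set_option maxHeartbeats 1000000

/-- 1D second derivative test: if `h` has global minimum at `0`, its second derivative
at `0` is nonnegative. -/
lemma secondDeriv_nonneg_of_min {h h' : ℝ → ℝ} {a : ℝ}
    (hd : ∀ t, HasDerivAt h (h' t) t)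
    (hd2 : HasDerivAt h' a 0) (hmin : ∀ t, h 0 ≤ h t) : 0 ≤ a := by
  by_contra ha
  push_neg at ha
  have h'0 : h' 0 = 0 := by
    have hloc : IsLocalMin h 0 := Filter.Eventually.of_forall hmin
    exact hloc.hasDerivAt_eq_zero (hd 0)
  have hslope : Tendsto (slope h' 0) (𝓝[≠] (0:ℝ)) (𝓝 a) :=
    hasDerivAt_iff_tendsto_slope.mp hd2
  have hev : ∀ᶠ t in 𝓝[>] (0:ℝ), slope h' 0 t < 0 :=
    nhdsWithin_mono 0 (fun t (ht : t ∈ Ioi 0) => ne_of_gt ht) (hslope.eventually_lt_const ha)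
  obtain ⟨δ, hδ, hsub⟩ := mem_nhdsGT_iff_exists_Ioo_subset.mp hev
  have hneg : ∀ t ∈ Ioo (0:ℝ) δ, h' t < 0 := by
    intro t ht
    have h2 : (h' t - 0) / (t - 0) < 0 := by
      have := hsub ht
      simpa [slope_def_field, h'0] using this
    rcases div_neg_iff.mp h2 with ⟨_, h4⟩ | ⟨h3, _⟩
    · linarith [ht.1]
    · linarith
  have hanti : StrictAntiOn h (Icc 0 δ) := by
    apply strictAntiOn_of_deriv_neg (convex_Icc 0 δ)
    · exact fun x _ => ((hd x).continuousAt).continuousWithinAt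
    · intro x hx
      rw [interior_Icc] at hx
      rw [(hd x).deriv]
      exact hneg x hx
  have : h δ < h 0 := hanti (left_mem_Icc.mpr (le_of_lt hδ)) (right_mem_Icc.mpr (le_of_lt hδ)) hδ
  exact absurd (hmin δ) (not_le.mpr this)

/-- Second derivative test along a line in Euclidean space. -/
lemma secondFDeriv_line_nonneg {q : ℕ} (g : EuclideanSpace ℝ (Fin q) → ℝ)
    (hg : ContDiff ℝ (⊤ : ℕ∞) g) (x₀ u : EuclideanSpace ℝ (Fin q))
    (hmin : ∀ y, g x₀ ≤ g y) :
    0 ≤ fderiv ℝ (fun y => fderiv ℝ g y u) x₀ u := by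
  set L : ℝ → EuclideanSpace ℝ (Fin q) := fun t => x₀ + t • u with hLdef
  have hL : ∀ t, HasDerivAt L u t := fun t => by
    simpa [hLdef] using ((hasDerivAt_id t).smul_const u).const_add x₀
  have hL0 : L 0 = x₀ := by simp [hLdef]
  have hd : ∀ t, HasDerivAt (fun s => g (L s)) (fderiv ℝ g (L t) u) t := fun t =>
    ((hg.differentiable (by simp) (L t)).hasFDerivAt).comp_hasDerivAt t (hL t)
  have hg' : ContDiff ℝ (⊤ : ℕ∞) (fun y => fderiv ℝ g y u) :=
    (ContinuousLinearMap.apply ℝ ℝ u).contDiff.comp (hg.fderiv_right (by simp))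
  have hd2 : HasDerivAt (fun t => fderiv ℝ g (L t) u)
      (fderiv ℝ (fun y => fderiv ℝ g y u) x₀ u) 0 := by
    have := ((hg'.differentiable (by simp) (L 0)).hasFDerivAt).comp_hasDerivAt 0 (hL 0)
    rwa [hL0] at this
  refine secondDeriv_nonneg_of_min hd hd2 ?_
  intro t; rw [hL0]; exact hmin (L t)

/-- The geometer's (nonnegative) Laplacian `Δφ = -∑ ∂²φ/∂x_i²` on Euclidean space. -/
noncomputable def geomLaplacian (q : ℕ) (φ : EuclideanSpace ℝ (Fin q) → ℝ)
    (x : EuclideanSpace ℝ (Fin q)) : ℝ :=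
  - ∑ i : Fin q,
      fderiv ℝ (fun y => fderiv ℝ φ y (EuclideanSpace.single i 1)) x (EuclideanSpace.single i 1)

/-- If a smooth bounded `φ : ℝ^q → ℝ` satisfies `2Δφ + (n−2)|dφ|² + k e^{−2φ} = 0`
with `n > 2` and `Δ` the nonnegative Laplacian, then `k ≥ 0`. -/
theorem nonneg_constant_in_critical_equation (q : ℕ) (n : ℕ) (hn : 2 < n) (k : ℝ)
    (φ : EuclideanSpace ℝ (Fin q) → ℝ) (hsmooth : ContDiff ℝ (⊤ : ℕ∞) φ)
    (hbdd : ∃ C : ℝ, ∀ x, |φ x| ≤ C)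
    (heq : ∀ x, 2 * geomLaplacian q φ x + ((n : ℝ) - 2) * ‖fderiv ℝ φ x‖ ^ 2
        + k * Real.exp (-2 * φ x) = 0) :
    0 ≤ k := by
  obtain ⟨C, hC⟩ := hbdd
  have hC0 : 0 ≤ C := le_trans (abs_nonneg _) (hC 0)
  set M : ℝ := (4 * q + 8 * ((n : ℝ) - 2) * C) * Real.exp (2 * C) with hMdef
  have hM0 : 0 ≤ M := by
    have : (0:ℝ) ≤ (n : ℝ) - 2 := by
      have : (2:ℝ) < n := by exact_mod_cast hn
      linarith
    positivity
  -- key claim: for every ε > 0, -ε * M ≤ k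
  have key : ∀ ε : ℝ, 0 < ε → -ε * M ≤ k := by
    intro ε hε
    set g : EuclideanSpace ℝ (Fin q) → ℝ := fun x => φ x + ε * ‖x‖ ^ 2 with hgdef
    have hgC : ContDiff ℝ (⊤ : ℕ∞) g := hsmooth.add (contDiff_const.mul (contDiff_norm_sq ℝ))
    -- coercivity
    have hco : Filter.Tendsto g (Filter.cocompact _) Filter.atTop := by
      have h1 : Filter.Tendsto (fun x : EuclideanSpace ℝ (Fin q) => -C + ε * ‖x‖ ^ 2)
          (Filter.cocompact _) Filter.atTop := by
        apply Filter.tendsto_atTop_add_const_left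
        apply Filter.Tendsto.const_mul_atTop hε
        exact (tendsto_pow_atTop two_ne_zero).comp tendsto_norm_cocompact_atTop
      apply Filter.tendsto_atTop_mono _ h1
      intro x
      have := abs_le.mp (hC x)
      simp only [hgdef]
      linarith [this.1]
    obtain ⟨x₀, hx₀⟩ := hgC.continuous.exists_forall_le hco
    -- gradient vanishes at x₀
    have hgd : ∀ y, HasFDerivAt g (fderiv ℝ φ y + (2 * ε) • innerSL ℝ y) y := by
      intro y
      have h1 : HasFDerivAt (fun x : EuclideanSpace ℝ (Fin q) => ε * ‖x‖ ^ 2)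
          ((2 * ε) • innerSL ℝ y) y := by
        have := ((hasStrictFDerivAt_norm_sq y).hasFDerivAt).const_mul ε
        refine this.congr_fderiv ?_
        ext z
        simp [two_smul]
        ring
      exact ((hsmooth.differentiable (by simp) y).hasFDerivAt).add h1
    have hloc : IsLocalMin g x₀ := Filter.Eventually.of_forall hx₀
    have hfz : fderiv ℝ φ x₀ + (2 * ε) • innerSL ℝ x₀ = 0 :=
      hloc.hasFDerivAt_eq_zero (hgd x₀)
    have hfφ : fderiv ℝ φ x₀ = -((2 * ε) • innerSL ℝ x₀) :=
      eq_neg_of_add_eq_zero_left hfz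
    have hnorm : ‖fderiv ℝ φ x₀‖ = 2 * ε * ‖x₀‖ := by
      rw [hfφ, norm_neg, norm_smul, innerSL_apply_norm]
      simp [abs_of_pos hε]
    -- ε ‖x₀‖² ≤ 2C
    have hball : ε * ‖x₀‖ ^ 2 ≤ 2 * C := by
      have h0 := hx₀ 0
      simp only [hgdef, norm_zero] at h0
      have h1 := abs_le.mp (hC x₀)
      have h2 := abs_le.mp (hC 0)
      nlinarith
    -- second derivative bound in each coordinate direction
    have hsec : ∀ i : Fin q,
        -(2 * ε) ≤ fderiv ℝ (fun y => fderiv ℝ φ y (EuclideanSpace.single i 1)) x₀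
          (EuclideanSpace.single i 1) := by
      intro i
      set u : EuclideanSpace ℝ (Fin q) := EuclideanSpace.single i 1 with hudef
      have hu : ‖u‖ = 1 := by simp [hudef, EuclideanSpace.norm_single]
      have h2 := secondFDeriv_line_nonneg g hgC x₀ u hx₀
      -- rewrite fderiv g as sum
      have hfun : (fun y => fderiv ℝ g y u)
          = (fun y => fderiv ℝ φ y u) + (fun y => ((2 * ε) • innerSL ℝ u) y) := by
        funext y
        have := (hgd y).fderiv
        simp only [Pi.add_apply, this, ContinuousLinearMap.add_apply,
          ContinuousLinearMap.smul_apply, innerSL_apply_apply, smul_eq_mul]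
        rw [real_inner_comm]
      have hdiff1 : DifferentiableAt ℝ (fun y => fderiv ℝ φ y u) x₀ := by
        have : ContDiff ℝ (⊤ : ℕ∞) (fun y => fderiv ℝ φ y u) :=
          (ContinuousLinearMap.apply ℝ ℝ u).contDiff.comp (hsmooth.fderiv_right (by simp))
        exact (this.differentiable (by simp)) x₀
      have hdiff2 : DifferentiableAt ℝ (fun y => ((2 * ε) • innerSL ℝ u) y) x₀ :=
        ((2 * ε) • innerSL ℝ u).differentiableAt
      have heval : fderiv ℝ (fun y => fderiv ℝ g y u) x₀ u
          = fderiv ℝ (fun y => fderiv ℝ φ y u) x₀ u + 2 * ε := by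
        rw [hfun, fderiv_add hdiff1 hdiff2, ContinuousLinearMap.add_apply,
          ContinuousLinearMap.fderiv]
        simp only [ContinuousLinearMap.smul_apply, innerSL_apply_apply, smul_eq_mul]
        rw [real_inner_self_eq_norm_sq, hu]
        ring
      rw [heval] at h2
      linarith
    -- Laplacian bound
    have hlap : geomLaplacian q φ x₀ ≤ 2 * ε * q := by
      unfold geomLaplacian
      have : -(2 * ε * q) ≤ ∑ i : Fin q,
          fderiv ℝ (fun y => fderiv ℝ φ y (EuclideanSpace.single i 1)) x₀
            (EuclideanSpace.single i 1) := by
        calc -(2 * ε * q) = ∑ _i : Fin q, -(2 * ε) := by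
              simp [Finset.sum_const]; ring
          _ ≤ _ := Finset.sum_le_sum fun i _ => hsec i
      linarith
    -- put it together
    have heqx := heq x₀
    have hgradsq : ‖fderiv ℝ φ x₀‖ ^ 2 ≤ 8 * ε * C := by
      rw [hnorm]
      have hx0sq : (0:ℝ) ≤ ‖x₀‖ ^ 2 := sq_nonneg _
      nlinarith
    have hn2 : (0:ℝ) ≤ (n : ℝ) - 2 := by
      have : (2:ℝ) < n := by exact_mod_cast hn
      linarith
    have hexp1 : Real.exp (-2 * φ x₀) ≤ Real.exp (2 * C) := by
      apply Real.exp_le_exp.mpr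
      have := abs_le.mp (hC x₀)
      linarith [this.1]
    have hexp0 : 0 < Real.exp (-2 * φ x₀) := Real.exp_pos _
    -- k * exp(-2 φ x₀) ≥ -ε (4q + 8(n-2)C)
    have hkey : -(ε * (4 * q + 8 * ((n:ℝ) - 2) * C)) ≤ k * Real.exp (-2 * φ x₀) := by
      nlinarith [hlap, hgradsq, heqx, mul_le_mul_of_nonneg_left hgradsq hn2]
    rcases le_or_gt 0 k with hk | hk
    · nlinarith
    ·
      have h1 : k * Real.exp (2 * C) ≤ k * Real.exp (-2 * φ x₀) →
          False ∨ True := fun _ => Or.inr trivial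
      have h2 : -(ε * (4 * q + 8 * ((n:ℝ) - 2) * C)) * Real.exp (2*C) ≤
          k * Real.exp (-2 * φ x₀) * Real.exp (2*C) :=
        mul_le_mul_of_nonneg_right hkey (Real.exp_pos _).le
      have h3 : k * Real.exp (-2 * φ x₀) * Real.exp (2*C) ≤ k := by
        have hprod : 1 ≤ Real.exp (-2 * φ x₀) * Real.exp (2*C) := by
          rw [← Real.exp_add]
          apply Real.one_le_exp
          have := abs_le.mp (hC x₀)
          linarith [this.2]
        have := mul_le_mul_of_nonpos_left hprod hk.le
        calc k * Real.exp (-2 * φ x₀) * Real.exp (2*C)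
            = k * (Real.exp (-2 * φ x₀) * Real.exp (2*C)) := by ring
          _ ≤ k * 1 := this
          _ = k := by ring
      calc -ε * M = -(ε * (4 * q + 8 * ((n:ℝ) - 2) * C)) * Real.exp (2*C) := by
            rw [hMdef]; ring
        _ ≤ k * Real.exp (-2 * φ x₀) * Real.exp (2*C) := h2
        _ ≤ k := h3
  -- conclude
  by_contra hk
  push_neg at hk
  have hM1 : 0 < M + 1 := by linarith
  have hε : 0 < -k / (M + 1) := div_pos (neg_pos.mpr hk) hM1
  have hthis := key _ hε
  have heq2 : -(-k / (M + 1)) * M = k * M / (M + 1) := by ring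
  rw [heq2, div_le_iff₀ hM1] at hthis
  nlinarith
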